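/- arXiv:2106.02966 — 2 statements merged into one kernel-verified Lean document; each statement's English description precedes it below -/
import Mathlib

section
/- (Edge regularity identity.) Fix m ≥ 3 and let μ ∈ Opt(m). Then for every edge e ∈ supp μ, m · β(μ; m) · μ(e) = Σ_{C : e ∈ E(C)} μ(C), where the sum is over all unlabeled m-cycles C in the support graph G_μ containing the edge e. -/
open Finset

/-- The cyclic successor of an index in `Fin m`. -/
def cnext {m : ℕ} (i : Fin m) : Fin m := ⟨(i.1 + 1) % m, Nat.mod_lt _ i.pos⟩

/-- `μ` is a probability mass on the 2-element subsets of `X`: it is nonnegative,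
vanishes on the diagonal, and has total mass 1. -/
def IsProbMass {X : Type*} [Fintype X] [DecidableEq X] (μ : Sym2 X → ℝ) : Prop :=
  (∀ e, 0 ≤ μ e) ∧ (∀ e : Sym2 X, e.IsDiag → μ e = 0) ∧ (∑ e : Sym2 X, μ e) = 1

/-- The weight `μ(C)` of the labeled cycle `f 0, f 1, ..., f (m-1), f 0`. -/
def cycleWeight {X : Type*} (μ : Sym2 X → ℝ) {m : ℕ} (f : Fin m → X) : ℝ :=
  ∏ i : Fin m, μ s(f i, f (cnext i))

/-- `β(μ; m)`: the sum of `μ(C)` over all unlabeled `m`-cycles `C` in the complete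
graph on `X`, computed as the sum over labeled cycles divided by `2m` (each unlabeled
`m`-cycle has exactly `2m` labelings). -/
noncomputable def beta {X : Type*} [Fintype X] [DecidableEq X] (μ : Sym2 X → ℝ) (m : ℕ) : ℝ :=
  (∑ f : Fin m → X, if Function.Injective f then cycleWeight μ f else 0) / (2 * m)

/-- `β(m)`: the supremum of `β(μ; m)` over all probability masses `μ` on the
2-element subsets of a finite set (every finite set being a copy of some `Fin n`). -/
noncomputable def betaSup (m : ℕ) : ℝ :=
  sSup {b : ℝ | ∃ (n : ℕ) (μ : Sym2 (Fin n) → ℝ), IsProbMass μ ∧ b = beta μ m}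

/-- The weighted degree `μ̄(x) = ∑_{y ≠ x} μ(xy)`. -/
noncomputable def wdeg {X : Type*} [Fintype X] [DecidableEq X] (μ : Sym2 X → ℝ) (x : X) : ℝ :=
  ∑ y ∈ Finset.univ.filter (· ≠ x), μ s(x, y)

/-- The support graph `G_μ`, whose edges are the pairs of positive mass. -/
def supportGraph {X : Type*} (μ : Sym2 X → ℝ) : SimpleGraph X where
  Adj x y := x ≠ y ∧ 0 < μ s(x, y)
  symm := ⟨fun x y h => ⟨h.1.symm, by rw [Sym2.eq_swap]; exact h.2⟩⟩
  loopless := ⟨fun x h => h.1 rfl⟩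

/-!
At an optimal `μ`, the line `t ↦ μ + t • (μ - δ_e)`, with `δ_e = Pi.single e 1`, consists of
probability masses for small `|t|` because `μ e > 0`, so the derivative of `β(·; m)` along it
vanishes at `t = 0`. The cycle polynomial is homogeneous of degree `m`, so by Euler's identity its
derivative in direction `μ` is `m · β(μ; m)`. For `m ≥ 3` the edges of an `m`-cycle are pairwise
distinct, so the polynomial is multilinear in the edge weights and `μ e` times its partial
derivative at `e` is the total weight of the cycles through `e`.
-/

section CycleWeight

variable {X : Type*} {m : ℕ}

lemma cnext_cnext_ne (hm : 3 ≤ m) (i : Fin m) : cnext (cnext i) ≠ i := by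
  intro h
  have hval : (i.1 + 2) % m = i.1 := by
    simpa [cnext, Nat.add_mod_mod, add_assoc] using congrArg Fin.val h
  have hdiv := Nat.mod_add_div (i.1 + 2) m
  have hm2 : m ≤ 2 := Nat.le_of_dvd two_pos (Dvd.intro ((i.1 + 2) / m) (by omega))
  omega

lemma injective_cycle_edge (hm : 3 ≤ m) {f : Fin m → X} (hf : Function.Injective f) :
    Function.Injective fun i => s(f i, f (cnext i)) := by
  intro i j h
  rcases Sym2.eq_iff.1 h with ⟨hij, -⟩ | ⟨hij, hji⟩
  · exact hf hij
  · exact absurd (hf hji ▸ congrArg cnext (hf hij)).symm (cnext_cnext_ne hm j)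

lemma cycleWeight_nonneg {μ : Sym2 X → ℝ} (hμ : ∀ e, 0 ≤ μ e) (f : Fin m → X) :
    0 ≤ cycleWeight μ f :=
  prod_nonneg fun _ _ => hμ _

lemma cycleWeight_eq_zero_of_not_forall_pos {μ : Sym2 X → ℝ} (hμ : ∀ e, 0 ≤ μ e)
    {f : Fin m → X} (h : ¬ ∀ i, 0 < μ s(f i, f (cnext i))) : cycleWeight μ f = 0 := by
  obtain ⟨i, hi⟩ := not_forall.1 h
  exact prod_eq_zero (mem_univ i) (le_antisymm (not_lt.1 hi) (hμ _))

def cycleWeightDeriv (μ ν : Sym2 X → ℝ) (f : Fin m → X) : ℝ :=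
  ∑ i, (∏ j ∈ univ.erase i, μ s(f j, f (cnext j))) * ν s(f i, f (cnext i))

lemma hasDerivAt_cycleWeight (μ ν : Sym2 X → ℝ) (f : Fin m → X) :
    HasDerivAt (fun t : ℝ => cycleWeight (μ + t • ν) f) (cycleWeightDeriv μ ν f) 0 := by
  have hedge : ∀ i ∈ (univ : Finset (Fin m)), HasDerivAt
      (fun t : ℝ => μ s(f i, f (cnext i)) + t * ν s(f i, f (cnext i)))
      (ν s(f i, f (cnext i))) 0 := fun i _ => by
    simpa using ((hasDerivAt_id (0 : ℝ)).mul_const (ν s(f i, f (cnext i)))).const_add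
      (μ s(f i, f (cnext i)))
  simpa [cycleWeight, cycleWeightDeriv] using HasDerivAt.fun_finsetProd hedge

lemma cycleWeightDeriv_sub (μ ν₁ ν₂ : Sym2 X → ℝ) (f : Fin m → X) :
    cycleWeightDeriv μ (ν₁ - ν₂) f = cycleWeightDeriv μ ν₁ f - cycleWeightDeriv μ ν₂ f := by
  simp only [cycleWeightDeriv, Pi.sub_apply, mul_sub, sum_sub_distrib]

lemma cycleWeightDeriv_self (μ : Sym2 X → ℝ) (f : Fin m → X) :
    cycleWeightDeriv μ μ f = m * cycleWeight μ f := by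
  simp only [cycleWeightDeriv, cycleWeight, mul_comm (∏ j ∈ _, _),
    mul_prod_erase univ (fun j => μ s(f j, f (cnext j))) (mem_univ _), sum_const, card_univ,
    Fintype.card_fin, nsmul_eq_mul]

lemma mul_cycleWeightDeriv_single [DecidableEq X] (hm : 3 ≤ m) (μ : Sym2 X → ℝ)
    {f : Fin m → X} (hf : Function.Injective f) (e : Sym2 X) :
    μ e * cycleWeightDeriv μ (Pi.single e 1) f =
      if ∃ i, s(f i, f (cnext i)) = e then cycleWeight μ f else 0 := by
  split_ifs with he
  · obtain ⟨i, rfl⟩ := he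
    rw [cycleWeightDeriv, sum_eq_single i, Pi.single_eq_same, mul_one, cycleWeight,
      ← mul_prod_erase univ (fun j => μ s(f j, f (cnext j))) (mem_univ i)]
    · intro j _ hji
      rw [Pi.single_eq_of_ne (fun h => hji (injective_cycle_edge hm hf h)), mul_zero]
    · exact fun h => absurd (mem_univ i) h
  · simp [cycleWeightDeriv, not_exists.1 he]

end CycleWeight

section Beta

variable {X : Type*} [Fintype X] [DecidableEq X]

noncomputable def betaDeriv (μ ν : Sym2 X → ℝ) (m : ℕ) : ℝ :=
  (∑ f : Fin m → X, if Function.Injective f then cycleWeightDeriv μ ν f else 0) / (2 * m)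

lemma hasDerivAt_beta (μ ν : Sym2 X → ℝ) (m : ℕ) :
    HasDerivAt (fun t : ℝ => beta (μ + t • ν) m) (betaDeriv μ ν m) 0 := by
  refine (HasDerivAt.fun_sum fun f _ => ?_).div_const _
  split_ifs
  · exact hasDerivAt_cycleWeight μ ν f
  · exact hasDerivAt_const _ _

lemma betaDeriv_sub (μ ν₁ ν₂ : Sym2 X → ℝ) (m : ℕ) :
    betaDeriv μ (ν₁ - ν₂) m = betaDeriv μ ν₁ m - betaDeriv μ ν₂ m := by
  simp only [betaDeriv, cycleWeightDeriv_sub, ← sub_div, ← sum_sub_distrib, ite_sub_ite,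
    sub_self]

lemma betaDeriv_self (μ : Sym2 X → ℝ) (m : ℕ) : betaDeriv μ μ m = m * beta μ m := by
  simp only [betaDeriv, beta, cycleWeightDeriv_self, ← mul_ite_zero, ← mul_sum, mul_div_assoc]

lemma mul_betaDeriv_single {m : ℕ} (hm : 3 ≤ m) {μ : Sym2 X → ℝ} (hμ : ∀ e, 0 ≤ μ e)
    (e : Sym2 X) :
    μ e * betaDeriv μ (Pi.single e 1) m =
      (∑ f : Fin m → X, if Function.Injective f ∧ (∀ i, 0 < μ s(f i, f (cnext i))) ∧
          (∃ i, s(f i, f (cnext i)) = e) then cycleWeight μ f else 0) / (2 * m) := by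
  rw [betaDeriv, mul_div_assoc', mul_sum]
  congr 1
  refine sum_congr rfl fun f _ => ?_
  by_cases hf : Function.Injective f
  · by_cases hpos : ∀ i, 0 < μ s(f i, f (cnext i))
    · simp only [hf, hpos, mul_cycleWeightDeriv_single hm μ hf e, if_true, implies_true, true_and]
    · simp only [hf, hpos, mul_cycleWeightDeriv_single hm μ hf e, if_true, false_and, and_false,
        cycleWeight_eq_zero_of_not_forall_pos hμ hpos, ite_self]
  · simp [hf]

end Beta

section ProbMass

variable {X : Type*} [Fintype X] [DecidableEq X]

lemma IsProbMass.le_one {μ : Sym2 X → ℝ} (hμ : IsProbMass μ) (e : Sym2 X) : μ e ≤ 1 :=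
  hμ.2.2 ▸ single_le_sum (fun e _ => hμ.1 e) (mem_univ e)

lemma IsProbMass.add_smul_sub_single {μ : Sym2 X → ℝ} (hμ : IsProbMass μ) {e : Sym2 X}
    (he : 0 < μ e) {t : ℝ} (ht : t ∈ Set.Ioo (-μ e) (μ e)) :
    IsProbMass (μ + t • (μ - Pi.single e 1)) := by
  have hle := hμ.le_one e
  obtain ⟨hnonneg, hdiag, hsum⟩ := hμ
  refine ⟨fun e' => ?_, fun e' he' => ?_, ?_⟩
  · rcases eq_or_ne e' e with rfl | hne
    · simp only [Pi.add_apply, Pi.smul_apply, Pi.sub_apply, Pi.single_eq_same, smul_eq_mul]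
      nlinarith [ht.1, ht.2]
    · simp only [Pi.add_apply, Pi.smul_apply, Pi.sub_apply, Pi.single_eq_of_ne hne, smul_eq_mul,
        sub_zero]
      nlinarith [ht.1, hnonneg e']
  · have hne : e' ≠ e := fun h => he.ne' (h ▸ hdiag e' he')
    simp [hdiag e' he', Pi.single_eq_of_ne hne]
  · simp [sum_add_distrib, ← mul_sum, sum_sub_distrib, hsum]

end ProbMass

section Transport

variable {X Y : Type*}

lemma sym2Map_bijective (σ : X ≃ Y) : Function.Bijective (Sym2.map σ) :=
  ⟨Sym2.map.injective σ.injective, fun z => ⟨Sym2.map σ.symm z, by simp [Sym2.map_map]⟩⟩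

variable [Fintype X] [DecidableEq X] [Fintype Y] [DecidableEq Y]

lemma IsProbMass.comp_sym2Map {μ : Sym2 Y → ℝ} (hμ : IsProbMass μ) (σ : X ≃ Y) :
    IsProbMass (μ ∘ Sym2.map σ) :=
  ⟨fun _ => hμ.1 _, fun _ he => hμ.2.1 _ ((Sym2.isDiag_map σ.injective).2 he),
    ((sym2Map_bijective σ).sum_comp μ).trans hμ.2.2⟩

lemma beta_comp_sym2Map (μ : Sym2 Y → ℝ) (σ : X ≃ Y) (m : ℕ) :
    beta (μ ∘ Sym2.map σ) m = beta μ m := by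
  rw [beta, beta]
  congr 1
  refine Fintype.sum_equiv ((Equiv.refl (Fin m)).arrowCongr σ) _ _ fun f => ?_
  change _ = ite (Function.Injective (σ ∘ f)) _ _
  simp [σ.injective.of_comp_iff, cycleWeight]

end Transport

section Bound

variable {X : Type*} [Fintype X] [DecidableEq X]

lemma card_filter_sym2_mk_eq_le_two (e : Sym2 X) : #{p : X × X | s(p.1, p.2) = e} ≤ 2 := by
  induction e using Sym2.ind with
  | _ a b =>
    refine (card_le_card fun p hp => ?_).trans (card_le_two (a := (a, b)) (b := (b, a)))
    rcases Sym2.mk_eq_mk_iff (q := (a, b)).1 (mem_filter.1 hp).2 with rfl | rfl <;> simp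

lemma IsProbMass.sum_sym2_mk_le_two {μ : Sym2 X → ℝ} (hμ : IsProbMass μ) :
    ∑ p : X × X, μ s(p.1, p.2) ≤ 2 :=
  calc ∑ p : X × X, μ s(p.1, p.2)
      = ∑ e, ∑ p : X × X with s(p.1, p.2) = e, μ e := by
        rw [← sum_fiberwise univ fun p : X × X => s(p.1, p.2)]
        exact sum_congr rfl fun e _ => sum_congr rfl fun p hp => by rw [(mem_filter.1 hp).2]
    _ ≤ ∑ e, 2 * μ e := sum_le_sum fun e _ => by
        rw [sum_const, nsmul_eq_mul]
        gcongr
        · exact hμ.1 e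
        · exact_mod_cast card_filter_sym2_mk_eq_le_two e
    _ = 2 := by rw [← mul_sum, hμ.2.2, mul_one]

lemma beta_le_two_pow {μ : Sym2 X → ℝ} (hμ : IsProbMass μ) (m : ℕ) : beta μ m ≤ 2 ^ m := by
  have hedges : Function.Injective fun (f : Fin m → X) i => (f i, f (cnext i)) :=
    fun f g h => funext fun i => (Prod.ext_iff.1 (congrFun h i)).1
  have hsum : (∑ f : Fin m → X, if Function.Injective f then cycleWeight μ f else 0) ≤ 2 ^ m :=
    calc _ ≤ ∑ f : Fin m → X, cycleWeight μ f :=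
          sum_le_sum fun f _ => by split_ifs <;> simp [cycleWeight_nonneg hμ.1]
      _ = ∑ g ∈ univ.image fun (f : Fin m → X) i => (f i, f (cnext i)),
            ∏ i, μ s((g i).1, (g i).2) := by
            rw [sum_image fun f _ g _ h => hedges h]; rfl
      _ ≤ ∑ g : Fin m → X × X, ∏ i, μ s((g i).1, (g i).2) :=
          sum_le_univ_sum_of_nonneg fun g => prod_nonneg fun i _ => hμ.1 _
      _ = (∑ p : X × X, μ s(p.1, p.2)) ^ m :=
          (Fintype.sum_pow (fun p : X × X => μ s(p.1, p.2)) m).symm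
      _ ≤ 2 ^ m := pow_le_pow_left₀ (sum_nonneg fun p _ => hμ.1 _) hμ.sum_sym2_mk_le_two m
  rcases Nat.eq_zero_or_pos m with rfl | hm
  · simp [beta]
  · have h2m : (1 : ℝ) ≤ 2 * m := by norm_cast; omega
    exact div_le_of_le_mul₀ (by positivity) (by positivity)
      (hsum.trans (le_mul_of_one_le_right (by positivity) h2m))

lemma beta_le_betaSup {μ : Sym2 X → ℝ} (hμ : IsProbMass μ) (m : ℕ) : beta μ m ≤ betaSup m := by
  let σ := (Fintype.equivFin X).symm
  refine le_csSup ⟨2 ^ m, ?_⟩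
    ⟨Fintype.card X, μ ∘ Sym2.map σ, hμ.comp_sym2Map σ, (beta_comp_sym2Map μ σ m).symm⟩
  rintro _ ⟨n, ν, hν, rfl⟩
  exact beta_le_two_pow hν m

end Bound

/-- Edge regularity identity: for `m ≥ 3` and `μ ∈ Opt(m)`, every edge `e ∈ supp μ`
satisfies `m·β(μ; m)·μ(e) = Σ_{C ∈ C_m(G_μ), e ∈ E(C)} μ(C)` (the sum over unlabeled
`m`-cycles of the support graph through `e`, computed via labeled cycles over `2m`). -/
theorem edge_regularity (m : ℕ) (hm : 3 ≤ m) {X : Type*} [Fintype X] [DecidableEq X]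
    (μ : Sym2 X → ℝ) (hμ : IsProbMass μ) (hopt : beta μ m = betaSup m)
    (e : Sym2 X) (he : 0 < μ e) :
    (m : ℝ) * beta μ m * μ e =
      (∑ f : Fin m → X, if Function.Injective f ∧ (∀ i, 0 < μ s(f i, f (cnext i))) ∧
          (∃ i, s(f i, f (cnext i)) = e) then cycleWeight μ f else 0) / (2 * m) := by
  have hcrit : betaDeriv μ (μ - Pi.single e 1) m = 0 := by
    refine IsLocalMax.hasDerivAt_eq_zero ?_ (hasDerivAt_beta μ _ m)
    filter_upwards [Ioo_mem_nhds (neg_neg_of_pos he) he] with t ht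
    simpa [hopt] using beta_le_betaSup (hμ.add_smul_sub_single he ht) m
  rw [betaDeriv_sub, betaDeriv_self, sub_eq_zero] at hcrit
  rw [hcrit, mul_comm, mul_betaDeriv_single hm hμ.1]
end

section
/- Fix m ∈ {5, 6} and define f : [0, 1) → ℝ by f(z) = (2/(2 − z))^4 · ((m − 4)/(m − 4 + z))^{m−4} · (1 − z). Then f is nondecreasing on [0, 2/(m − 1)] and nonincreasing on [2/(m − 1), 1); moreover there is a unique z* ∈ (0, 1) with f(z*) = 1, and f(z) > 1 for all z ∈ (0, z*) while f(z) < 1 for all z ∈ (z*, 1). -/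
open Finset

/-!
With `k = m - 4`, the logarithmic derivative of `f` is
`4 / (2 - z) - k / (k + z) - 1 / (1 - z) = z (2 - (k + 3) z) / ((2 - z) (k + z) (1 - z))`,
so `f` strictly increases on `[0, 2 / (k + 3)]` and strictly decreases on `[2 / (k + 3), 1]`.
Since `f 0 = 1` and `f 1 = 0`, the intermediate value theorem on the decreasing branch gives the
unique crossing `z*`. The argument works for every `m ≥ 5`.
-/

theorem exists_crossing_of_strictMonoOn_of_strictAntiOn {f : ℝ → ℝ} {a b c : ℝ}
    (hac : a < c) (hcb : c < b) (hmono : StrictMonoOn f (Set.Icc a c))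
    (hanti : StrictAntiOn f (Set.Icc c b)) (hcont : ContinuousOn f (Set.Icc c b)) (hba : f b < f a) :
    ∃ zs ∈ Set.Ioo a b, f zs = f a ∧
      (∀ z ∈ Set.Ioo a b, f z = f a → z = zs) ∧
      (∀ z ∈ Set.Ioo a zs, f a < f z) ∧
      (∀ z ∈ Set.Ioo zs b, f z < f a) := by
  have hac' : f a < f c := hmono (Set.left_mem_Icc.2 hac.le) (Set.right_mem_Icc.2 hac.le) hac
  obtain ⟨zs, ⟨hczs, hzsb⟩, hzs⟩ :=
    intermediate_value_Icc' hcb.le hcont ⟨hba.le, hac'.le⟩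
  have hczs : c < zs := hczs.lt_of_ne (by rintro rfl; exact hac'.ne' hzs)
  have hzsb : zs < b := hzsb.lt_of_ne (by rintro rfl; exact hba.ne hzs)
  have above : ∀ z ∈ Set.Ioo a zs, f a < f z := by
    rintro z ⟨haz, hzzs⟩
    rcases le_or_gt z c with hzc | hcz
    · exact hmono (Set.left_mem_Icc.2 hac.le) ⟨haz.le, hzc⟩ haz
    · exact hzs ▸ hanti ⟨hcz.le, hzzs.le.trans hzsb.le⟩ ⟨hczs.le, hzsb.le⟩ hzzs
  have below : ∀ z ∈ Set.Ioo zs b, f z < f a := by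
    rintro z ⟨hzsz, hzb⟩
    exact hzs ▸ hanti ⟨hczs.le, hzsb.le⟩ ⟨hczs.le.trans hzsz.le, hzb.le⟩ hzsz
  refine ⟨zs, ⟨hac.trans hczs, hzsb⟩, hzs, ?_, above, below⟩
  rintro z ⟨haz, hzb⟩ hz
  rcases lt_trichotomy z zs with h | h | h
  · exact absurd hz (above z ⟨haz, h⟩).ne'
  · exact h
  · exact absurd hz (below z ⟨h, hzb⟩).ne

noncomputable def shapeFun (k : ℕ) (z : ℝ) : ℝ :=
  (2 / (2 - z)) ^ 4 * ((k : ℝ) / (k + z)) ^ k * (1 - z)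

section shapeFun

variable {k : ℕ}

theorem hasDerivAt_shapeFun (hk : 0 < k) {z : ℝ} (hzk : -(k : ℝ) < z) (hz2 : z < 2) :
    HasDerivAt (shapeFun k)
      ((2 / (2 - z)) ^ 4 * ((k : ℝ) / (k + z)) ^ k / ((2 - z) * (k + z)) *
        (z * (2 - (k + 3) * z))) z := by
  have h2 : 2 - z ≠ 0 := by linarith
  have hkz : (k : ℝ) + z ≠ 0 := by linarith
  have ha := (hasDerivAt_const z (2 : ℝ)).fun_div ((hasDerivAt_id' z).const_sub 2) h2
  have hb := (hasDerivAt_const z (k : ℝ)).fun_div ((hasDerivAt_id' z).const_add (k : ℝ)) hkz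
  refine (((ha.fun_pow 4).fun_mul (hb.fun_pow k)).fun_mul
    ((hasDerivAt_id' z).const_sub 1)).congr_deriv ?_
  obtain ⟨n, rfl⟩ := Nat.exists_eq_add_of_lt hk
  simp only [zero_add, Nat.add_sub_cancel, pow_succ]
  field_simp
  push_cast
  ring

theorem continuousOn_shapeFun (hk : 0 < k) : ContinuousOn (shapeFun k) (Set.Icc 0 1) :=
  fun z hz => (hasDerivAt_shapeFun hk (by linarith [hz.1, (Nat.cast_pos.2 hk : (0 : ℝ) < k)])
    (by linarith [hz.2])).continuousAt.continuousWithinAt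

theorem exists_hasDerivAt_shapeFun (hk : 0 < k) {z : ℝ} (hz : z ∈ Set.Ioo 0 1) :
    ∃ p > 0, HasDerivAt (shapeFun k) (p * (z * (2 - (k + 3) * z))) z := by
  have hk' : (0 : ℝ) < k := Nat.cast_pos.2 hk
  have h2 : 0 < 2 - z := by linarith [hz.2]
  have hkz : 0 < (k : ℝ) + z := by linarith [hz.1]
  exact ⟨_, by positivity, hasDerivAt_shapeFun hk (by linarith [hz.1]) (by linarith [hz.2])⟩

theorem two_div_add_three_mem_Ioo (hk : 0 < k) : 2 / ((k : ℝ) + 3) ∈ Set.Ioo 0 1 :=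
  ⟨by positivity, by rw [div_lt_one (by positivity)]; linarith [(Nat.cast_pos.2 hk : (0 : ℝ) < k)]⟩

theorem strictMonoOn_shapeFun (hk : 0 < k) :
    StrictMonoOn (shapeFun k) (Set.Icc 0 (2 / (k + 3))) := by
  have hc := (two_div_add_three_mem_Ioo hk).2
  refine strictMonoOn_of_deriv_pos (convex_Icc _ _)
    ((continuousOn_shapeFun hk).mono (Set.Icc_subset_Icc_right hc.le)) fun z hz => ?_
  rw [interior_Icc] at hz
  obtain ⟨p, hp, hd⟩ := exists_hasDerivAt_shapeFun hk ⟨hz.1, hz.2.trans hc⟩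
  rw [hd.deriv]
  have : (k + 3) * z < 2 := (lt_div_iff₀' (by positivity)).1 hz.2
  exact mul_pos hp (mul_pos hz.1 (by linarith))

theorem strictAntiOn_shapeFun (hk : 0 < k) :
    StrictAntiOn (shapeFun k) (Set.Icc (2 / (k + 3)) 1) := by
  have hc := (two_div_add_three_mem_Ioo hk).1
  refine strictAntiOn_of_deriv_neg (convex_Icc _ _)
    ((continuousOn_shapeFun hk).mono (Set.Icc_subset_Icc_left hc.le)) fun z hz => ?_
  rw [interior_Icc] at hz
  obtain ⟨p, hp, hd⟩ := exists_hasDerivAt_shapeFun hk ⟨hc.trans hz.1, hz.2⟩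
  rw [hd.deriv]
  have : 2 < (k + 3) * z := (div_lt_iff₀' (by positivity)).1 hz.1
  exact mul_neg_of_pos_of_neg hp (mul_neg_of_pos_of_neg (hc.trans hz.1) (by linarith))

end shapeFun

/-- For `m ∈ {5, 6}`, the function `f(z) = (2/(2-z))^4 · ((m-4)/(m-4+z))^{m-4} · (1-z)` is
nondecreasing on `[0, 2/(m-1)]` and nonincreasing on `[2/(m-1), 1)`; moreover there is a
unique `z* ∈ (0, 1)` with `f(z*) = 1`, and `f > 1` on `(0, z*)` while `f < 1` on `(z*, 1)`. -/
theorem f_shape (m : ℕ) (hm : m ∈ ({5, 6} : Set ℕ)) (f : ℝ → ℝ)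
    (hf : ∀ z : ℝ,
      f z = (2 / (2 - z)) ^ 4 * (((m : ℝ) - 4) / ((m : ℝ) - 4 + z)) ^ (m - 4) * (1 - z)) :
    MonotoneOn f (Set.Icc (0 : ℝ) (2 / ((m : ℝ) - 1))) ∧
    AntitoneOn f (Set.Ico (2 / ((m : ℝ) - 1)) 1) ∧
    ∃ zs ∈ Set.Ioo (0 : ℝ) 1, f zs = 1 ∧
      (∀ z ∈ Set.Ioo (0 : ℝ) 1, f z = 1 → z = zs) ∧
      (∀ z ∈ Set.Ioo (0 : ℝ) zs, 1 < f z) ∧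
      (∀ z ∈ Set.Ioo zs (1 : ℝ), f z < 1) := by
  obtain ⟨k, rfl⟩ : ∃ k, m = k + 4 := ⟨m - 4, by rcases hm with rfl | rfl <;> rfl⟩
  have hk : 0 < k := by simp only [Set.mem_insert_iff, Set.mem_singleton_iff] at hm; omega
  have hfk : f = shapeFun k := funext fun z => by
    rw [hf, shapeFun, Nat.add_sub_cancel]; push_cast; ring_nf
  have hc : 2 / (((k + 4 : ℕ) : ℝ) - 1) = 2 / (k + 3) := by push_cast; ring_nf
  obtain ⟨hc0, hc1⟩ := two_div_add_three_mem_Ioo hk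
  have hf0 : shapeFun k 0 = 1 := by simp [shapeFun, hk.ne']
  have hf1 : shapeFun k 1 = 0 := by simp [shapeFun]
  have crossing := exists_crossing_of_strictMonoOn_of_strictAntiOn hc0 hc1
    (strictMonoOn_shapeFun hk) (strictAntiOn_shapeFun hk)
    ((continuousOn_shapeFun hk).mono (Set.Icc_subset_Icc_left hc0.le)) (by simp [hf0, hf1])
  rw [hf0] at crossing
  rw [hc, hfk]
  exact ⟨(strictMonoOn_shapeFun hk).monotoneOn,
    ((strictAntiOn_shapeFun hk).mono Set.Ico_subset_Icc_self).antitoneOn, crossing⟩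
end
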